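/- arXiv:0812.3721 — 3 statements merged into one kernel-verified Lean document; each statement's English description precedes it below -/
import Mathlib

section
/- Fix τ > 0, ξ ∈ ℝ \ {0}, c ∈ ℝ \ {0}, and let Υ(z) = ∑_{k ∈ ℤ} [1/(e^{kτ} z − ξ) − 1/(e^{kτ} c − ξ)] (symmetric limit of partial sums), defined for z ∈ ℂ with e^{kτ} z ≠ ξ for all k. Then Υ converges for such z and satisfies the functional equation Υ(e^{τ} z) = Υ(z) + 1/ξ. -/
/-!
With `r = e^τ` the `k`-th term is `Φ (r ^ k)`, where `Φ x = 1/(x z - ξ) - 1/(x c - ξ)`. Since `Φ`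
vanishes to first order both at `x = 0` and at `x = ∞`, the series converges geometrically in both
directions, hence unconditionally. Replacing `z` by `r z` shifts the index of the `z`-part by one,
which leaves the sum unchanged, and turns the `c`-part into the telescoping series
`∑ [G (r ^ (k + 1)) - G (r ^ k)]` with `G x = 1/(x c - ξ)`, whose symmetric partial sums tend to
`G ∞ - G 0 = 0 - (-1/ξ) = 1/ξ`.
-/

open Filter Topology Asymptotics SummationFilter

section SummableComp

variable {𝕜 E : Type*} [NontriviallyNormedField 𝕜] [NormedAddCommGroup E] [CompleteSpace E]
  {φ : 𝕜 → E}

theorem summable_comp_pow_of_isBigO (hφ : φ =O[𝓝 0] id) {q : 𝕜} (hq : ‖q‖ < 1) :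
    Summable fun n : ℕ => φ (q ^ n) := by
  refine summable_of_isBigO_nat (summable_geometric_of_lt_one (norm_nonneg q) hq) ?_
  simpa [Function.comp_def, norm_pow] using
    (hφ.comp_tendsto (tendsto_pow_atTop_nhds_zero_of_norm_lt_one hq)).norm_right

theorem summable_comp_zpow_of_isBigO (h₀ : φ =O[𝓝 0] id)
    (h_inv : (fun x => φ x⁻¹) =O[𝓝 0] id) {r : 𝕜} (hr : 1 < ‖r‖) :
    Summable fun k : ℤ => φ (r ^ k) := by
  have hq : ‖r⁻¹‖ < 1 := by rw [norm_inv]; exact inv_lt_one_of_one_lt₀ hr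
  refine .of_nat_of_neg ?_ ?_
  · simpa [inv_pow] using summable_comp_pow_of_isBigO h_inv hq
  · simpa [inv_pow] using summable_comp_pow_of_isBigO h₀ hq

end SummableComp

theorem hasSum_symmetricIcc_sub {M : Type*} [AddCommGroup M] [TopologicalSpace M]
    [IsTopologicalAddGroup M] {g : ℤ → M} {a b : M}
    (ha : Tendsto (fun N : ℕ => g (N + 1)) atTop (𝓝 a))
    (hb : Tendsto (fun N : ℕ => g (-N)) atTop (𝓝 b)) :
    HasSum (fun k => g (k + 1) - g k) (a - b) (symmetricIcc ℤ) := by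
  rw [hasSum_symmetricIcc_iff]
  refine (ha.sub hb).congr fun N => ?_
  induction N with
  | zero => simp
  | succ N ih =>
    push_cast
    rw [Finset.sum_Icc_succ_eq_add_endpoints, ← ih]
    abel_nf

section Upsilon

variable {𝕜 : Type*} [NontriviallyNormedField 𝕜] {ξ z c r : 𝕜}

theorem isBigO_one_div_mul_sub_sub (hξ : ξ ≠ 0) (z c : 𝕜) :
    (fun x => 1 / (x * z - ξ) - 1 / (x * c - ξ)) =O[𝓝 0] id := by
  have hd : DifferentiableAt 𝕜 (fun x => 1 / (x * z - ξ) - 1 / (x * c - ξ)) 0 := by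
    fun_prop (disch := simpa using hξ)
  exact hd.isBigO_sub.congr (fun x => by simp) sub_zero

theorem isBigO_one_div_inv_mul_sub_sub (hz : z ≠ 0) (hc : c ≠ 0) (ξ : 𝕜) :
    (fun x => 1 / (x⁻¹ * z - ξ) - 1 / (x⁻¹ * c - ξ)) =O[𝓝 0] id := by
  have hinv (w : 𝕜) (x : 𝕜) (hx : x ≠ 0) : 1 / (x⁻¹ * w - ξ) = x / (w - ξ * x) := by
    rw [show x⁻¹ * w - ξ = x⁻¹ * (w - ξ * x) by field_simp, one_div, mul_inv, inv_inv,
      div_eq_mul_inv]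
  have heq (x : 𝕜) : x / (z - ξ * x) - x / (c - ξ * x) =
      1 / (x⁻¹ * z - ξ) - 1 / (x⁻¹ * c - ξ) := by
    rcases eq_or_ne x 0 with rfl | hx
    · simp -- both sides vanish, the right one because `0⁻¹ = 0`
    · rw [hinv z x hx, hinv c x hx]
  have hd : DifferentiableAt 𝕜 (fun x => x / (z - ξ * x) - x / (c - ξ * x)) 0 := by
    fun_prop (disch := simpa)
  exact hd.isBigO_sub.congr (fun x => by simp [heq]) sub_zero

theorem tendsto_one_div_zpow_mul_sub_atTop (hc : c ≠ 0) (ξ : 𝕜) (hr : 1 < ‖r‖) :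
    Tendsto (fun N : ℕ => 1 / (r ^ ((N : ℤ) + 1) * c - ξ)) atTop (𝓝 0) := by
  have hpow : Tendsto (fun N : ℕ => r ^ ((N : ℤ) + 1)) atTop (Bornology.cobounded 𝕜) := by
    rw [← tendsto_norm_atTop_iff_cobounded]
    refine ((tendsto_pow_atTop_atTop_of_one_lt hr).comp (tendsto_add_atTop_nat 1)).congr
      fun N => ?_
    rw [Function.comp_apply, ← norm_pow, ← zpow_natCast]
    push_cast
    rfl
  simpa only [one_div, Function.comp_def] using tendsto_inv₀_cobounded.comp
    ((tendsto_sub_const_cobounded ξ).comp ((tendsto_mul_right_cobounded hc).comp hpow))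

theorem tendsto_one_div_zpow_neg_mul_sub (hξ : ξ ≠ 0) (c : 𝕜) (hr : 1 < ‖r‖) :
    Tendsto (fun N : ℕ => 1 / (r ^ (-(N : ℤ)) * c - ξ)) atTop (𝓝 (-(1 / ξ))) := by
  have hq : ‖r⁻¹‖ < 1 := by rw [norm_inv]; exact inv_lt_one_of_one_lt₀ hr
  have hcont : ContinuousAt (fun x => 1 / (x * c - ξ)) 0 := by
    fun_prop (disch := simpa using hξ)
  simpa [inv_pow, neg_div, Function.comp_def] using
    hcont.tendsto.comp (tendsto_pow_atTop_nhds_zero_of_norm_lt_one hq)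

variable [CompleteSpace 𝕜]

/-- `upsilon (exp τ) ξ c z` is `Υ(z)`; the series converges unconditionally (`hasSum_upsilon`),
so its symmetric partial sums have the same limit. -/
noncomputable def upsilon (r ξ c z : 𝕜) : 𝕜 :=
  ∑' k : ℤ, (1 / (r ^ k * z - ξ) - 1 / (r ^ k * c - ξ))

theorem hasSum_upsilon (hξ : ξ ≠ 0) (hz : z ≠ 0) (hc : c ≠ 0) (hr : 1 < ‖r‖) :
    HasSum (fun k : ℤ => 1 / (r ^ k * z - ξ) - 1 / (r ^ k * c - ξ)) (upsilon r ξ c z) :=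
  (summable_comp_zpow_of_isBigO (isBigO_one_div_mul_sub_sub hξ z c)
    (isBigO_one_div_inv_mul_sub_sub hz hc ξ) hr).hasSum

theorem upsilon_mul_left (hξ : ξ ≠ 0) (hz : z ≠ 0) (hc : c ≠ 0) (hr : 1 < ‖r‖) :
    upsilon r ξ c (r * z) = upsilon r ξ c z + 1 / ξ := by
  have hr0 : r ≠ 0 := norm_pos_iff.mp (one_pos.trans hr)
  have hmul : HasSum (fun k : ℤ => 1 / (r ^ k * (r * z) - ξ) - 1 / (r ^ k * c - ξ))
      (upsilon r ξ c (r * z)) (symmetricIcc ℤ) :=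
    (hasSum_upsilon hξ (mul_ne_zero hr0 hz) hc hr).mono_left le_atTop
  have hshift : HasSum (fun k : ℤ => 1 / (r ^ (k + 1) * z - ξ) - 1 / (r ^ (k + 1) * c - ξ))
      (upsilon r ξ c z) (symmetricIcc ℤ) :=
    (((Equiv.addRight (1 : ℤ)).hasSum_iff
      (f := fun k : ℤ => 1 / (r ^ k * z - ξ) - 1 / (r ^ k * c - ξ))).mpr
      (hasSum_upsilon hξ hz hc hr)).mono_left le_atTop
  have htele : HasSum (fun k : ℤ => 1 / (r ^ (k + 1) * c - ξ) - 1 / (r ^ k * c - ξ))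
      (0 - -(1 / ξ)) (symmetricIcc ℤ) :=
    hasSum_symmetricIcc_sub (g := fun k : ℤ => 1 / (r ^ k * c - ξ))
      (tendsto_one_div_zpow_mul_sub_atTop hc ξ hr) (tendsto_one_div_zpow_neg_mul_sub hξ c hr)
  rw [zero_sub, neg_neg] at htele
  refine hmul.unique ?_
  convert hshift.add htele using 1
  funext k
  rw [zpow_add_one₀ hr0]
  ring

end Upsilon

theorem upsilon_functional_equation_general (τ ξ c : ℝ) (hτ : 0 < τ) (hξ : ξ ≠ 0) (hc : c ≠ 0)
    (z : ℂ) (hz0 : z ≠ 0) :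
    ∃ L : ℂ,
      Tendsto (fun N : ℕ => ∑ k ∈ Finset.Icc (-(N : ℤ)) (N : ℤ),
          (1 / ((Real.exp ((k : ℝ) * τ) : ℂ) * z - (ξ : ℂ)) -
            1 / ((Real.exp ((k : ℝ) * τ) : ℂ) * (c : ℂ) - (ξ : ℂ))))
        atTop (nhds L) ∧
      Tendsto (fun N : ℕ => ∑ k ∈ Finset.Icc (-(N : ℤ)) (N : ℤ),
          (1 / ((Real.exp ((k : ℝ) * τ) : ℂ) * ((Real.exp τ : ℂ) * z) - (ξ : ℂ)) -
            1 / ((Real.exp ((k : ℝ) * τ) : ℂ) * (c : ℂ) - (ξ : ℂ))))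
        atTop (nhds (L + 1 / (ξ : ℂ))) := by
  have hexp (k : ℤ) : (Real.exp (k * τ) : ℂ) = (Real.exp τ : ℂ) ^ k := by
    rw [Complex.ofReal_exp, Complex.ofReal_exp, ← Complex.exp_int_mul]
    push_cast
    ring_nf
  have hr : 1 < ‖(Real.exp τ : ℂ)‖ := by
    rw [Complex.norm_real, Real.norm_of_nonneg (Real.exp_pos τ).le]
    exact Real.one_lt_exp_iff.mpr hτ
  have hξ' : (ξ : ℂ) ≠ 0 := Complex.ofReal_ne_zero.mpr hξ
  have hc' : (c : ℂ) ≠ 0 := Complex.ofReal_ne_zero.mpr hc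
  have hr0 : (Real.exp τ : ℂ) ≠ 0 := Complex.ofReal_ne_zero.mpr (Real.exp_pos τ).ne'
  simp only [hexp, ← hasSum_symmetricIcc_iff]
  refine ⟨upsilon (Real.exp τ : ℂ) ξ c z, ?_, ?_⟩
  · exact (hasSum_upsilon hξ' hz0 hc' hr).mono_left le_atTop
  · rw [← upsilon_mul_left hξ' hz0 hc' hr]
    exact (hasSum_upsilon hξ' (mul_ne_zero hr0 hz0) hc' hr).mono_left le_atTop

/-- for τ > 0, ξ, c ∈ ℝ \ {0}, the series
Υ(z) = ∑_{k∈ℤ} [1/(e^{kτ}z − ξ) − 1/(e^{kτ}c − ξ)] (symmetric limit) converges at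
every admissible z ≠ 0, and satisfies Υ(e^{τ}z) = Υ(z) + 1/ξ. -/
theorem upsilon_functional_equation (τ ξ c : ℝ) (hτ : 0 < τ) (hξ : ξ ≠ 0) (hc : c ≠ 0)
    (hcξ : ∀ k : ℤ, Real.exp ((k : ℝ) * τ) * c ≠ ξ)
    (z : ℂ) (hz0 : z ≠ 0)
    (hz : ∀ k : ℤ, (Real.exp ((k : ℝ) * τ) : ℂ) * z ≠ (ξ : ℂ)) :
    ∃ L : ℂ,
      Tendsto (fun N : ℕ => ∑ k ∈ Finset.Icc (-(N : ℤ)) (N : ℤ),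
          (1 / ((Real.exp ((k : ℝ) * τ) : ℂ) * z - (ξ : ℂ)) -
            1 / ((Real.exp ((k : ℝ) * τ) : ℂ) * (c : ℂ) - (ξ : ℂ))))
        atTop (nhds L) ∧
      Tendsto (fun N : ℕ => ∑ k ∈ Finset.Icc (-(N : ℤ)) (N : ℤ),
          (1 / ((Real.exp ((k : ℝ) * τ) : ℂ) * ((Real.exp τ : ℂ) * z) - (ξ : ℂ)) -
            1 / ((Real.exp ((k : ℝ) * τ) : ℂ) * (c : ℂ) - (ξ : ℂ))))
        atTop (nhds (L + 1 / (ξ : ℂ))) :=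
  upsilon_functional_equation_general τ ξ c hτ hξ hc z hz0
end

section
/- Let Γ, Λ, c be as follows: Γ a group of Möbius transformations preserving ℍ, Λ ⊂ ℝ a closed set avoiding ∞ such that ∑_{φ∈Γ}|φ'(z)| converges locally uniformly off Λ, and c ∈ ℝ \ Λ. Define Υ(z) = ∑_{φ ∈ Γ} [1/φ(z) − 1/φ(c)]. Then for every ρ ∈ Γ and every z where all terms are defined: Υ(ρ(z)) = Υ(z) + K(ρ), where K(ρ) = ∑_{φ ∈ Γ} [1/φ(ρ(c)) − 1/φ(c)]. Moreover K : Γ → ℝ is a group homomorphism into (ℝ, +): K(ρ₁ ∘ ρ₂) = K(ρ₁) + K(ρ₂). -/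
open Complex ComplexConjugate Filter Topology

/-!
Splitting `1/φ(ρz) − 1/φ(c) = [1/(φρ)(z) − 1/(φρ)(c)] + [1/φ(ρc) − 1/φ(c)]` and reindexing
`φ ↦ φρ` gives the automorphy relation, once we know that the series `∑ [1/φ(z) − 1/φ(p)]`
converges for one point `z ≠ p` off `Λ` iff it converges for every such point. Termwise, the
ratio of the `w`- and `z`-terms is the cross-ratio `(w−p)(z−u)/((z−p)(w−u))` with `u = φ⁻¹(0)`,
which is bounded as long as `φ⁻¹(0)` stays away from `w`. It does for all but finitely many `φ`:
if `0 ∈ Λ` then `φ⁻¹(0) ∈ Λ`; otherwise `φ'(φ⁻¹(0)) · (φ⁻¹)'(0) = 1`, while both factors are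
eventually smaller than `1` by the locally uniform convergence of `∑ |φ'|` near `w` and at `0`.
`K` is real because the coefficients are, and additive by automorphy at `z = ρ₂ c`.
-/

noncomputable def moebius (a b c d : ℂ) (z : ℂ) : ℂ := (a * z + b) / (c * z + d)

def IsMoebius (f : ℂ → ℂ) : Prop :=
  ∃ a b c d : ℂ, a * d - b * c ≠ 0 ∧ f = moebius a b c d

section Moebius

variable {a b c d : ℂ}

lemma differentiableAt_moebius {x : ℂ} (hx : c * x + d ≠ 0) :
    DifferentiableAt ℂ (moebius a b c d) x := by
  unfold moebius
  fun_prop (disch := exact hx)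

lemma one_div_moebius_sub_one_div_moebius {z p : ℂ} (hz : a * z + b ≠ 0) (hp : a * p + b ≠ 0) :
    1 / moebius a b c d z - 1 / moebius a b c d p
      = (b * c - a * d) * (z - p) / ((a * z + b) * (a * p + b)) := by
  simp only [moebius, one_div_div]
  rw [div_sub_div _ _ hz hp]
  ring

/-- Differentiability excludes the pole, which is a zero of `moebius` since `x / 0 = 0`. -/
lemma norm_mul_le_norm_mul_add_of_zeros_far (hdet : a * d - b * c ≠ 0) {w : ℂ} {δ : ℝ}
    (hfar : ∀ u, moebius a b c d u = 0 → DifferentiableAt ℂ (moebius a b c d) u →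
      δ ≤ ‖w - u‖) :
    ‖a‖ * δ ≤ ‖a * w + b‖ := by
  rcases eq_or_ne a 0 with rfl | ha
  · simp
  have hroot : a * (-b / a) + b = 0 := by field_simp; ring
  have hpole : c * (-b / a) + d ≠ 0 := by
    intro h
    apply hdet
    field_simp at h
    linear_combination h
  have hδ := hfar (-b / a) (by simp [moebius, hroot]) (differentiableAt_moebius hpole)
  calc ‖a‖ * δ ≤ ‖a‖ * ‖w - -b / a‖ := by gcongr
    _ = ‖a * w + b‖ := by rw [← norm_mul]; congr 1; field_simp; ring

lemma norm_one_div_moebius_sub_le {w z p : ℂ} {δ : ℝ} (hδ : 0 < δ)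
    (hw : a * w + b ≠ 0) (hz : a * z + b ≠ 0) (hp : a * p + b ≠ 0) (hzp : z ≠ p)
    (hfar : ‖a‖ * δ ≤ ‖a * w + b‖) :
    ‖1 / moebius a b c d w - 1 / moebius a b c d p‖
      ≤ ‖w - p‖ * (δ + ‖z - w‖) / (‖z - p‖ * δ) *
        ‖1 / moebius a b c d z - 1 / moebius a b c d p‖ := by
  have hzp' : z - p ≠ 0 := sub_ne_zero.mpr hzp
  have hnum : δ * ‖a * z + b‖ ≤ (δ + ‖z - w‖) * ‖a * w + b‖ :=
    calc δ * ‖a * z + b‖ = δ * ‖(a * w + b) + a * (z - w)‖ := by ring_nf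
      _ ≤ δ * (‖a * w + b‖ + ‖a‖ * ‖z - w‖) := by
        gcongr
        exact (norm_add_le _ _).trans_eq (by rw [norm_mul])
      _ = δ * ‖a * w + b‖ + ‖a‖ * δ * ‖z - w‖ := by ring
      _ ≤ δ * ‖a * w + b‖ + ‖a * w + b‖ * ‖z - w‖ := by gcongr
      _ = (δ + ‖z - w‖) * ‖a * w + b‖ := by ring
  rw [one_div_moebius_sub_one_div_moebius hw hp, one_div_moebius_sub_one_div_moebius hz hp]
  simp only [norm_div, norm_mul]
  rw [div_mul_div_comm, div_le_div_iff₀ (by positivity) (by positivity)]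
  calc ‖b * c - a * d‖ * ‖w - p‖ * (‖z - p‖ * δ * (‖a * z + b‖ * ‖a * p + b‖))
      = ‖w - p‖ * ‖z - p‖ * ‖b * c - a * d‖ * ‖a * p + b‖ * (δ * ‖a * z + b‖) := by ring
    _ ≤ ‖w - p‖ * ‖z - p‖ * ‖b * c - a * d‖ * ‖a * p + b‖ *
          ((δ + ‖z - w‖) * ‖a * w + b‖) := by gcongr
    _ = _ := by ring

end Moebius

namespace IsMoebius

variable {f : ℂ → ℂ}

lemma differentiableAt (hf : IsMoebius f) {x : ℂ} (hx : f x ≠ 0) : DifferentiableAt ℂ f x := by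
  obtain ⟨a, b, c, d, -, rfl⟩ := hf
  exact differentiableAt_moebius (div_ne_zero_iff.mp hx).2

lemma norm_one_div_sub_le (hf : IsMoebius f) {w z p : ℂ} {δ : ℝ} (hδ : 0 < δ)
    (hw : f w ≠ 0) (hz : f z ≠ 0) (hp : f p ≠ 0) (hzp : z ≠ p)
    (hfar : ∀ u, f u = 0 → DifferentiableAt ℂ f u → δ ≤ ‖w - u‖) :
    ‖1 / f w - 1 / f p‖ ≤ ‖w - p‖ * (δ + ‖z - w‖) / (‖z - p‖ * δ) * ‖1 / f z - 1 / f p‖ := by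
  obtain ⟨a, b, c, d, hdet, rfl⟩ := hf
  exact norm_one_div_moebius_sub_le hδ (div_ne_zero_iff.mp hw).1 (div_ne_zero_iff.mp hz).1
    (div_ne_zero_iff.mp hp).1 hzp (norm_mul_le_norm_mul_add_of_zeros_far hdet hfar)

end IsMoebius

lemma deriv_mul_deriv_eq_one_of_rightInverse {𝕜 : Type*} [NontriviallyNormedField 𝕜]
    {f g : 𝕜 → 𝕜} (hfg : Function.RightInverse g f) {x : 𝕜}
    (hf : DifferentiableAt 𝕜 f (g x)) (hg : DifferentiableAt 𝕜 g x) :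
    deriv f (g x) * deriv g x = 1 := by
  have hcomp : f ∘ g = id := funext hfg
  have := hf.hasDerivAt.comp x hg.hasDerivAt
  rw [hcomp] at this
  exact this.unique (hasDerivAt_id x)

lemma TendstoLocallyUniformlyOn.exists_mem_nhdsWithin_eventually_cofinite_norm_lt
    {ι α E : Type*} [TopologicalSpace α] [SeminormedAddCommGroup E]
    {f : ι → α → E} {S : α → E} {U : Set α}
    (h : TendstoLocallyUniformlyOn (fun (s : Finset ι) x => ∑ i ∈ s, f i x) S atTop U)
    {ε : ℝ} (hε : 0 < ε) {x : α} (hx : x ∈ U) :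
    ∃ t ∈ 𝓝[U] x, ∀ᶠ i in cofinite, ∀ y ∈ t, ‖f i y‖ < ε := by
  classical
  obtain ⟨t, ht, hev⟩ :=
    Metric.tendstoLocallyUniformlyOn_iff.mp h (ε / 2) (half_pos hε) x hx
  obtain ⟨F, hF⟩ := eventually_atTop.mp hev
  refine ⟨t, ht, eventually_cofinite.mpr (F.finite_toSet.subset fun i hi => ?_)⟩
  by_contra hiF
  obtain ⟨y, hy, hle⟩ := not_forall₂.mp hi
  have h₁ := hF F le_rfl y hy
  have h₂ := hF (insert i F) (F.subset_insert i) y hy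
  rw [Finset.sum_insert hiF] at h₂
  have hsplit : f i y = (S y - ∑ j ∈ F, f j y) - (S y - (f i y + ∑ j ∈ F, f j y)) := by abel
  have := norm_sub_le (S y - ∑ j ∈ F, f j y) (S y - (f i y + ∑ j ∈ F, f j y))
  rw [← hsplit, ← dist_eq_norm, ← dist_eq_norm] at this
  linarith [not_lt.mp hle]

section Action

variable {G : Type*} [Group G] (act : G →* Function.End ℂ)

lemma act_mul_apply (g h : G) (z : ℂ) : act (g * h) z = act g (act h z) := by
  rw [map_mul]; rfl

lemma act_one_apply (z : ℂ) : act 1 z = z := by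
  rw [map_one]; rfl

lemma act_act_inv_apply (g : G) (z : ℂ) : act g (act g⁻¹ z) = z := by
  rw [← act_mul_apply, mul_inv_cancel, act_one_apply]

lemma act_inv_act_apply (g : G) (z : ℂ) : act g⁻¹ (act g z) = z := by
  rw [← act_mul_apply, inv_mul_cancel, act_one_apply]

noncomputable def upsilonTerm (p z : ℂ) (g : G) : ℂ := 1 / act g z - 1 / act g p

lemma upsilonTerm_act_act (ρ : G) (p z : ℂ) :
    upsilonTerm act (act ρ p) (act ρ z) = upsilonTerm act p z ∘ Equiv.mulRight ρ := by
  ext g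
  simp [upsilonTerm, act_mul_apply]

lemma tsum_upsilonTerm_act_act (ρ : G) (p z : ℂ) :
    ∑' g, upsilonTerm act (act ρ p) (act ρ z) g = ∑' g, upsilonTerm act p z g := by
  rw [upsilonTerm_act_act]
  exact (Equiv.mulRight ρ).tsum_eq _

lemma summable_upsilonTerm_act_act_iff (ρ : G) (p z : ℂ) :
    Summable (upsilonTerm act (act ρ p) (act ρ z)) ↔ Summable (upsilonTerm act p z) := by
  rw [upsilonTerm_act_act]
  exact (Equiv.mulRight ρ).summable_iff

lemma upsilonTerm_add_upsilonTerm (p q z : ℂ) :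
    upsilonTerm act q z + upsilonTerm act p q = upsilonTerm act p z := by
  ext g
  simp only [upsilonTerm, Pi.add_apply]
  ring

lemma upsilonTerm_self (p : ℂ) : upsilonTerm act p p = 0 := by
  ext g
  simp [upsilonTerm]

lemma upsilonTerm_swap (p z : ℂ) : upsilonTerm act z p = -upsilonTerm act p z := by
  ext g
  simp [upsilonTerm]

variable {act} {Λ : Set ℂ}

lemma exists_pos_forall_zeros_far_of_zero_mem (hΛ : IsClosed Λ)
    (hΛinv : ∀ g x, x ∉ Λ → act g x ∉ Λ) (h0 : 0 ∈ Λ) {w : ℂ} (hw : w ∉ Λ) :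
    ∃ δ > 0, ∀ g u, act g u = 0 → δ ≤ ‖w - u‖ := by
  obtain ⟨δ, hδ, hball⟩ := Metric.isOpen_iff.mp hΛ.isOpen_compl w hw
  refine ⟨δ, hδ, fun g u hgu => ?_⟩
  by_contra! hlt
  have hu : u ∉ Λ := hball (by rwa [Metric.mem_ball, dist_comm, dist_eq_norm])
  exact hΛinv g u hu (by rwa [hgu])

lemma exists_pos_eventually_zeros_far_of_zero_notMem (hM : ∀ g, IsMoebius (act g))
    (hΛ : IsClosed Λ) {S : ℂ → ℝ}
    (hloc : TendstoLocallyUniformlyOn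
      (fun (s : Finset G) (x : ℂ) => ∑ g ∈ s, ‖deriv (act g : ℂ → ℂ) x‖) S atTop Λᶜ)
    (h0 : 0 ∉ Λ) {w : ℂ} (hw : w ∉ Λ) (hw0 : w ≠ 0) :
    ∃ δ > 0, ∀ᶠ g in cofinite,
      ∀ u, act g u = 0 → DifferentiableAt ℂ (act g) u → δ ≤ ‖w - u‖ := by
  obtain ⟨t, ht, hsmall⟩ := hloc.exists_mem_nhdsWithin_eventually_cofinite_norm_lt one_pos hw
  rw [hΛ.isOpen_compl.nhdsWithin_eq hw] at ht
  obtain ⟨δ, hδ, hball⟩ := Metric.mem_nhds_iff.mp ht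
  have hsum0 : Summable fun g : G => ‖deriv (act g : ℂ → ℂ) 0‖ := ⟨S 0, hloc.tendsto_at h0⟩
  have hsmall0 : ∀ᶠ g in cofinite, ‖deriv (act g⁻¹ : ℂ → ℂ) 0‖ < 1 :=
    inv_injective.tendsto_cofinite.eventually
      (hsum0.tendsto_cofinite_zero.eventually_lt_const one_pos)
  refine ⟨min δ ‖w‖, lt_min hδ (norm_pos_iff.mpr hw0), ?_⟩
  filter_upwards [hsmall, hsmall0] with g hg hg0 u hu hdiff
  by_contra! hlt
  have hu_eq : act g⁻¹ 0 = u := by rw [← hu, act_inv_act_apply]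
  have hu0 : u ≠ 0 := by
    rintro rfl
    simp at hlt
  have hmem : u ∈ t := hball <| by
    rw [Metric.mem_ball, dist_comm, dist_eq_norm]
    exact hlt.trans_le (min_le_left _ _)
  have hone := deriv_mul_deriv_eq_one_of_rightInverse (act_act_inv_apply act g)
    (hu_eq ▸ hdiff) ((hM g⁻¹).differentiableAt (hu_eq ▸ hu0))
  rw [hu_eq] at hone
  have hgu := hg u hmem
  rw [norm_norm] at hgu
  have : ‖deriv (act g) u * deriv (act g⁻¹) 0‖ < 1 := by
    rw [norm_mul]
    exact mul_lt_one_of_nonneg_of_lt_one_left (norm_nonneg _) hgu hg0.le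
  rw [hone, norm_one] at this
  exact lt_irrefl _ this

lemma exists_pos_eventually_zeros_far (hM : ∀ g, IsMoebius (act g))
    (hΛ : IsClosed Λ) (hΛinv : ∀ g x, x ∉ Λ → act g x ∉ Λ) {S : ℂ → ℝ}
    (hloc : TendstoLocallyUniformlyOn
      (fun (s : Finset G) (x : ℂ) => ∑ g ∈ s, ‖deriv (act g : ℂ → ℂ) x‖) S atTop Λᶜ)
    {w : ℂ} (hw : w ∉ Λ) (hw0 : w ≠ 0) :
    ∃ δ > 0, ∀ᶠ g in cofinite,
      ∀ u, act g u = 0 → DifferentiableAt ℂ (act g) u → δ ≤ ‖w - u‖ := by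
  by_cases h0 : (0 : ℂ) ∈ Λ
  · obtain ⟨δ, hδ, hfar⟩ := exists_pos_forall_zeros_far_of_zero_mem hΛ hΛinv h0 hw
    exact ⟨δ, hδ, .of_forall fun g u hu _ => hfar g u hu⟩
  · exact exists_pos_eventually_zeros_far_of_zero_notMem hM hΛ hloc h0 hw hw0

lemma summable_upsilonTerm_of_summable (hM : ∀ g, IsMoebius (act g))
    (hΛ : IsClosed Λ) (hΛinv : ∀ g x, x ∉ Λ → act g x ∉ Λ) {S : ℂ → ℝ}
    (hloc : TendstoLocallyUniformlyOn
      (fun (s : Finset G) (x : ℂ) => ∑ g ∈ s, ‖deriv (act g : ℂ → ℂ) x‖) S atTop Λᶜ)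
    {p z w : ℂ} (hw : w ∉ Λ) (hpg : ∀ g, act g p ≠ 0) (hzg : ∀ g, act g z ≠ 0)
    (hwg : ∀ g, act g w ≠ 0) (hzp : z ≠ p) (hsum : Summable (upsilonTerm act p z)) :
    Summable (upsilonTerm act p w) := by
  obtain ⟨δ, hδ, hfar⟩ :=
    exists_pos_eventually_zeros_far hM hΛ hΛinv hloc hw (by simpa [act_one_apply] using hwg 1)
  refine .of_norm_bounded_eventually
    (g := fun g => ‖w - p‖ * (δ + ‖z - w‖) / (‖z - p‖ * δ) * ‖upsilonTerm act p z g‖)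
    (hsum.norm.mul_left _) ?_
  filter_upwards [hfar] with g hg
  exact (hM g).norm_one_div_sub_le hδ (hwg g) (hzg g) (hpg g) hzp hg

lemma summable_upsilonTerm_iff (hM : ∀ g, IsMoebius (act g))
    (hΛ : IsClosed Λ) (hΛinv : ∀ g x, x ∉ Λ → act g x ∉ Λ) {S : ℂ → ℝ}
    (hloc : TendstoLocallyUniformlyOn
      (fun (s : Finset G) (x : ℂ) => ∑ g ∈ s, ‖deriv (act g : ℂ → ℂ) x‖) S atTop Λᶜ)
    {p z w : ℂ} (hz : z ∉ Λ) (hw : w ∉ Λ) (hpg : ∀ g, act g p ≠ 0) (hzg : ∀ g, act g z ≠ 0)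
    (hwg : ∀ g, act g w ≠ 0) (hzp : z ≠ p) (hwp : w ≠ p) :
    Summable (upsilonTerm act p z) ↔ Summable (upsilonTerm act p w) :=
  ⟨summable_upsilonTerm_of_summable hM hΛ hΛinv hloc hw hpg hzg hwg hzp,
    summable_upsilonTerm_of_summable hM hΛ hΛinv hloc hz hpg hwg hzg hwp⟩

theorem tsum_upsilonTerm_act (hM : ∀ g, IsMoebius (act g))
    (hΛ : IsClosed Λ) (hΛinv : ∀ g x, x ∉ Λ → act g x ∉ Λ) {S : ℂ → ℝ}
    (hloc : TendstoLocallyUniformlyOn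
      (fun (s : Finset G) (x : ℂ) => ∑ g ∈ s, ‖deriv (act g : ℂ → ℂ) x‖) S atTop Λᶜ)
    {ρ : G} {p z : ℂ} (hp : p ∉ Λ) (hz : z ∉ Λ) (hpg : ∀ g, act g p ≠ 0)
    (hρpg : ∀ g, act g (act ρ p) ≠ 0) (hzg : ∀ g, act g z ≠ 0)
    (hρzg : ∀ g, act g (act ρ z) ≠ 0) :
    ∑' g, upsilonTerm act p (act ρ z) g
      = ∑' g, upsilonTerm act p z g + ∑' g, upsilonTerm act p (act ρ p) g := by
  rcases eq_or_ne z p with rfl | hzp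
  · simp [upsilonTerm_self]
  rcases eq_or_ne (act ρ p) p with hρp | hρp
  · rw [← tsum_upsilonTerm_act_act act ρ p z, hρp, upsilonTerm_self]
    simp
  rcases eq_or_ne (act ρ z) p with hρz | hρz
  · rw [← tsum_upsilonTerm_act_act act ρ p z, hρz, upsilonTerm_self, upsilonTerm_swap]
    simp [tsum_neg]
  have hiff {w : ℂ} (hw : w ∉ Λ) (hwg : ∀ g, act g w ≠ 0) (hwp : w ≠ p) :
      Summable (upsilonTerm act p z) ↔ Summable (upsilonTerm act p w) :=
    summable_upsilonTerm_iff hM hΛ hΛinv hloc hz hw hpg hzg hwg hzp hwp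
  have hρp_iff := hiff (hΛinv ρ p hp) hρpg hρp
  by_cases hsum : Summable (upsilonTerm act p z)
  · rw [← upsilonTerm_add_upsilonTerm act p (act ρ p) (act ρ z),
      ← tsum_upsilonTerm_act_act act ρ p z]
    exact ((summable_upsilonTerm_act_act_iff act ρ p z).mpr hsum).tsum_add (hρp_iff.mp hsum)
  · have hρz_iff := hiff (hΛinv ρ z hz) hρzg hρz
    rw [tsum_eq_zero_of_not_summable hsum, tsum_eq_zero_of_not_summable (hρz_iff.not.mp hsum),
      tsum_eq_zero_of_not_summable (hρp_iff.not.mp hsum), add_zero]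

lemma conj_tsum_upsilonTerm (hconj : ∀ g z, conj (act g z) = act g (conj z)) (p z : ℂ) :
    conj (∑' g, upsilonTerm act p z g) = ∑' g, upsilonTerm act (conj p) (conj z) g := by
  rw [Complex.conj_tsum]
  congr 1 with g
  simp [upsilonTerm, hconj]

end Action

theorem upsilon_automorphy_and_K_additive_general {G : Type*} [Group G]
    (act : G →* Function.End ℂ)
    (hmoeb : ∀ g : G, ∃ a b c d : ℝ, a * d - b * c ≠ 0 ∧
      (∀ z : ℂ, 0 < z.im → 0 < (act g z).im) ∧
      ∀ z : ℂ, act g z = ((a : ℂ) * z + b) / ((c : ℂ) * z + d))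
    (Λ : Set ℂ) (hΛclosed : IsClosed Λ)
    (hΛinv : ∀ g : G, ∀ x : ℂ, x ∉ Λ → act g x ∉ Λ)
    (S : ℂ → ℝ)
    (hloc : TendstoLocallyUniformlyOn
      (fun (s : Finset G) (x : ℂ) => ∑ g ∈ s, ‖deriv (act g : ℂ → ℂ) x‖)
      S atTop Λᶜ)
    (c : ℝ) (hc : (c : ℂ) ∉ Λ)
    (hcz : ∀ g g' : G, act g (act g' (c : ℂ)) ≠ 0)
    (K : G → ℂ)
    (hK : ∀ ρ : G, K ρ = ∑' g : G, (1 / act g (act ρ (c : ℂ)) - 1 / act g (c : ℂ))) :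
    (∀ ρ : G, ∀ z : ℂ, z ∉ Λ → (∀ g : G, act g z ≠ 0) →
      (∀ g : G, act g (act ρ z) ≠ 0) →
      (∑' g : G, (1 / act g (act ρ z) - 1 / act g (c : ℂ))) =
        (∑' g : G, (1 / act g z - 1 / act g (c : ℂ))) + K ρ) ∧
    (∀ ρ : G, (K ρ).im = 0) ∧
    (∀ ρ₁ ρ₂ : G, K (ρ₁ * ρ₂) = K ρ₁ + K ρ₂) := by
  have hM (g : G) : IsMoebius (act g) := by
    obtain ⟨a, b, c, d, hdet, -, hg⟩ := hmoeb g
    exact ⟨a, b, c, d, by exact_mod_cast hdet, funext hg⟩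
  have hconj (g : G) (z : ℂ) : conj (act g z) = act g (conj z) := by
    obtain ⟨a, b, c, d, -, -, hg⟩ := hmoeb g
    simp [hg]
  have hKΥ (ρ : G) : K ρ = ∑' g, upsilonTerm act c (act ρ c) g := hK ρ
  have hcg (g : G) : act g (c : ℂ) ≠ 0 := by simpa [act_one_apply] using hcz g 1
  have automorphy (ρ : G) (z : ℂ) (hz : z ∉ Λ) (hzg : ∀ g, act g z ≠ 0)
      (hρzg : ∀ g, act g (act ρ z) ≠ 0) :
      ∑' g, upsilonTerm act c (act ρ z) g = ∑' g, upsilonTerm act c z g + K ρ := by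
    rw [hKΥ]
    exact tsum_upsilonTerm_act hM hΛclosed hΛinv hloc hc hz hcg (hcz · ρ) hzg hρzg
  refine ⟨automorphy, fun ρ => ?_, fun ρ₁ ρ₂ => ?_⟩
  · rw [← conj_eq_iff_im, hKΥ, conj_tsum_upsilonTerm hconj, hconj, conj_ofReal]
  · rw [hKΥ (ρ₁ * ρ₂), hKΥ ρ₂, act_mul_apply, add_comm]
    exact automorphy ρ₁ _ (hΛinv ρ₂ _ hc) (hcz · ρ₂)
      (by simpa [act_mul_apply] using (hcz · (ρ₁ * ρ₂)))

/-- with Γ, Λ, c as in the locally uniformly summable setting, the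
function Υ(z) = ∑_{φ∈Γ}[1/φ(z) − 1/φ(c)] satisfies Υ(ρ(z)) = Υ(z) + K(ρ) with
K(ρ) = ∑_{φ∈Γ}[1/φ(ρ(c)) − 1/φ(c)], K is real-valued, and K is additive:
K(ρ₁∘ρ₂) = K(ρ₁) + K(ρ₂). -/
theorem upsilon_automorphy_and_K_additive {G : Type*} [Group G]
    (act : G →* Function.End ℂ)
    (hmoeb : ∀ g : G, ∃ a b c d : ℝ, a * d - b * c ≠ 0 ∧
      (∀ z : ℂ, 0 < z.im → 0 < (act g z).im) ∧
      ∀ z : ℂ, act g z = ((a : ℂ) * z + b) / ((c : ℂ) * z + d))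
    (Λ : Set ℂ) (hΛclosed : IsClosed Λ) (hΛreal : Λ ⊆ Set.range (Complex.ofReal))
    (hΛinv : ∀ g : G, ∀ x : ℂ, x ∉ Λ → act g x ∉ Λ)
    (S : ℂ → ℝ)
    (hloc : TendstoLocallyUniformlyOn
      (fun (s : Finset G) (x : ℂ) => ∑ g ∈ s, ‖deriv (act g : ℂ → ℂ) x‖)
      S atTop Λᶜ)
    (c : ℝ) (hc : (c : ℂ) ∉ Λ)
    (hcz : ∀ g g' : G, act g (act g' (c : ℂ)) ≠ 0)
    (K : G → ℂ)
    (hK : ∀ ρ : G, K ρ = ∑' g : G, (1 / act g (act ρ (c : ℂ)) - 1 / act g (c : ℂ))) :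
    (∀ ρ : G, ∀ z : ℂ, z ∉ Λ → (∀ g : G, act g z ≠ 0) →
      (∀ g : G, act g (act ρ z) ≠ 0) →
      (∑' g : G, (1 / act g (act ρ z) - 1 / act g (c : ℂ))) =
        (∑' g : G, (1 / act g z - 1 / act g (c : ℂ))) + K ρ) ∧
    (∀ ρ : G, (K ρ).im = 0) ∧
    (∀ ρ₁ ρ₂ : G, K (ρ₁ * ρ₂) = K ρ₁ + K ρ₂) :=
  upsilon_automorphy_and_K_additive_general act hmoeb Λ hΛclosed hΛinv S hloc c hc hcz K hK
end

section
/- Let g : [0,T] × D → ℂ be a flow on a domain D ⊂ ℂ solving ∂g_t(z)/∂t = −P(g_t(z), t) with g_0(z) = z, where P(·,t) is holomorphic on a domain containing all trajectories and (z,t) ↦ P(z,t) is continuous. Write P(ζ,t) − P(ω,t) = (ζ − ω)·Ψ_t(ζ,ω) with Ψ_t continuous. Then for any two points z, w ∈ D whose solutions exist on [0,t], g_t(z) − g_t(w) = (z − w)·exp(−∫₀ᵗ Ψ_s(g_s(z), g_s(w)) ds). In particular, if z ≠ w then g_t(z) ≠ g_t(w), i.e. the flow map g_t is injective on its domain of existence.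 -/
open Complex Filter

/-!
The difference `Δ s = g s z - g s w` of two trajectories solves the scalar linear equation
`Δ' = -Δ · Ψ s (g s z) (g s w)`, so `Δ · exp (∫ Ψ)` is constant; the exponential never vanishes.
-/

open Set in
theorem eq_mul_exp_neg_integral_of_hasDerivAt_neg_mul_of_continuous {Δ k : ℝ → ℂ} {a b : ℝ}
    (hab : a ≤ b) (hk : Continuous k) (hΔ : ∀ s ∈ Icc a b, HasDerivAt Δ (-(Δ s * k s)) s) :
    Δ b = Δ a * exp (-∫ s in a..b, k s) := by
  set I : ℝ → ℂ := fun u => ∫ s in a..u, k s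
  have hI : ∀ s, HasDerivAt I (k s) s := fun s =>
    intervalIntegral.integral_hasDerivAt_right (hk.intervalIntegrable _ _)
      hk.stronglyMeasurable.stronglyMeasurableAtFilter hk.continuousAt
  have hderiv : ∀ s ∈ Icc a b, HasDerivAt (fun u => Δ u * exp (I u)) 0 s := fun s hs => by
    refine ((hΔ s hs).mul (hI s).cexp).congr_deriv ?_
    ring
  have hconst := constant_of_has_deriv_right_zero
    (fun s hs => (hderiv s hs).continuousAt.continuousWithinAt)
    (fun s hs => (hderiv s (Ico_subset_Icc_self hs)).hasDerivWithinAt) b (right_mem_Icc.2 hab)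
  simp only [I, intervalIntegral.integral_same, exp_zero, mul_one] at hconst
  rw [exp_neg, ← hconst, mul_inv_cancel_right₀ (exp_ne_zero _)]

open Set in
theorem eq_mul_exp_neg_integral_of_hasDerivAt_neg_mul {Δ k : ℝ → ℂ} {a b : ℝ}
    (hab : a ≤ b) (hk : ContinuousOn k (Icc a b))
    (hΔ : ∀ s ∈ Icc a b, HasDerivAt Δ (-(Δ s * k s)) s) :
    Δ b = Δ a * exp (-∫ s in a..b, k s) := by
  set k' : ℝ → ℂ := fun s => k (projIcc a b hab s)
  have hk' : Continuous k' :=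
    hk.comp_continuous (continuous_subtype_val.comp continuous_projIcc) fun s =>
      (projIcc a b hab s).2
  have hkk' : ∀ s ∈ Icc a b, k' s = k s := fun s hs => by simp only [k', projIcc_of_mem hab hs]
  have hint : ∫ s in a..b, k' s = ∫ s in a..b, k s :=
    intervalIntegral.integral_congr fun s hs => hkk' s (by rwa [uIcc_of_le hab] at hs)
  rw [← hint]
  exact eq_mul_exp_neg_integral_of_hasDerivAt_neg_mul_of_continuous hab hk' fun s hs => by
    simpa only [hkk' s hs] using hΔ s hs

theorem loewner_flow_injective_general (T : ℝ) (D : Set ℂ) (P : ℂ → ℝ → ℂ)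
    (Ψ : ℝ → ℂ → ℂ → ℂ)
    (hΨcont : Continuous fun p : ℝ × ℂ × ℂ => Ψ p.1 p.2.1 p.2.2)
    (hΨ : ∀ (t : ℝ) (ζ ω : ℂ), P ζ t - P ω t = (ζ - ω) * Ψ t ζ ω)
    (g : ℝ → ℂ → ℂ) (t : ℝ) (ht : t ∈ Set.Icc 0 T)
    (z w : ℂ) (hzD : z ∈ D) (hwD : w ∈ D)
    (hg0 : ∀ u ∈ D, g 0 u = u)
    (hode : ∀ u ∈ ({z, w} : Set ℂ), ∀ s ∈ Set.Icc 0 t,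
      HasDerivAt (fun v => g v u) (-(P (g s u) s)) s) :
    g t z - g t w =
      (z - w) * Complex.exp (-(∫ s in (0 : ℝ)..t, Ψ s (g s z) (g s w))) ∧
    (z ≠ w → g t z ≠ g t w) := by
  have hodez := hode z (by simp)
  have hodew := hode w (by simp)
  have hcz : ContinuousOn (fun s => g s z) (Set.Icc 0 t) := fun s hs =>
    (hodez s hs).continuousAt.continuousWithinAt
  have hcw : ContinuousOn (fun s => g s w) (Set.Icc 0 t) := fun s hs =>
    (hodew s hs).continuousAt.continuousWithinAt
  have hcont : ContinuousOn (fun s => Ψ s (g s z) (g s w)) (Set.Icc 0 t) :=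
    hΨcont.comp_continuousOn (continuousOn_id.prodMk (hcz.prodMk hcw))
  have hdiff : ∀ s ∈ Set.Icc 0 t, HasDerivAt (fun v => g v z - g v w)
      (-((g s z - g s w) * Ψ s (g s z) (g s w))) s := fun s hs => by
    refine ((hodez s hs).sub (hodew s hs)).congr_deriv ?_
    linear_combination -hΨ s (g s z) (g s w)
  have hflow := eq_mul_exp_neg_integral_of_hasDerivAt_neg_mul ht.1 hcont hdiff
  rw [hg0 z hzD, hg0 w hwD] at hflow
  refine ⟨hflow, fun hzw hgzw => ?_⟩
  rw [sub_eq_zero.2 hgzw] at hflow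
  exact mul_ne_zero (sub_ne_zero.2 hzw) (exp_ne_zero _) hflow.symm

/-- for the Loewner flow ġ_t(z) = −P(g_t(z),t), g_0(z) = z, writing
P(ζ,t) − P(ω,t) = (ζ−ω)Ψ_t(ζ,ω) with Ψ continuous, one has
g_t(z) − g_t(w) = (z−w)·exp(−∫₀ᵗ Ψ_s(g_s(z),g_s(w)) ds); in particular the flow
map g_t is injective. -/
theorem loewner_flow_injective (T : ℝ) (D : Set ℂ) (P : ℂ → ℝ → ℂ)
    (hPcont : Continuous fun p : ℂ × ℝ => P p.1 p.2)
    (hPhol : ∀ t : ℝ, Differentiable ℂ (fun ζ => P ζ t))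
    (Ψ : ℝ → ℂ → ℂ → ℂ)
    (hΨcont : Continuous fun p : ℝ × ℂ × ℂ => Ψ p.1 p.2.1 p.2.2)
    (hΨ : ∀ (t : ℝ) (ζ ω : ℂ), P ζ t - P ω t = (ζ - ω) * Ψ t ζ ω)
    (g : ℝ → ℂ → ℂ) (t : ℝ) (ht : t ∈ Set.Icc 0 T)
    (z w : ℂ) (hzD : z ∈ D) (hwD : w ∈ D)
    (hg0 : ∀ u ∈ D, g 0 u = u)
    (hode : ∀ u ∈ ({z, w} : Set ℂ), ∀ s ∈ Set.Icc 0 t,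
      HasDerivAt (fun v => g v u) (-(P (g s u) s)) s) :
    g t z - g t w =
      (z - w) * Complex.exp (-(∫ s in (0 : ℝ)..t, Ψ s (g s z) (g s w))) ∧
    (z ≠ w → g t z ≠ g t w) :=
  loewner_flow_injective_general T D P Ψ hΨcont hΨ g t ht z w hzD hwD hg0 hode
end
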